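/- For any separating tree T on [n], the simple essential lattice congruences ≡ for which T is ≡-admissible form an interval [≡_∘, ≡_•] in the lattice of simple congruences, where ≡_∘ is determined by forbidding (taking the upper ideal generated by) all up and down arcs that are not subarcs of any mandatory arc of T, and ≡_• is determined by forbidding the upper ideal generated by the forbidden arcs of T. -/

import Mathlib

open Relation Finset

/-- The undirected simple graph underlying a directed edge relation. -/
def dirGraph {α : Type*} (E : α → α → Prop) : SimpleGraph α where
  Adj a b := a ≠ b ∧ (E a b ∨ E b a)
  symm := ⟨fun a b h => ⟨h.1.symm, h.2.symm⟩⟩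
  loopless := ⟨fun a h => h.1 rfl⟩

/-- `x` lies in the subtree attached to `p` at `j`: every walk from `x` to `j`
passes through `p`. -/
def inSub {α : Type*} (E : α → α → Prop) (j p x : α) : Prop :=
  ∀ w : (dirGraph E).Walk x j, p ∈ w.support

def atMostTwo {α : Type*} (s : Set α) : Prop :=
  ∀ a ∈ s, ∀ b ∈ s, ∀ c ∈ s, a = b ∨ a = c ∨ b = c

/-- A separating tree on `[n]`, encoded by its directed edge relation
(`E a b` means there is an edge directed from `a` to `b`, i.e. `b` is a parent of `a`). -/
def IsSepTree {n : ℕ} (E : Fin n → Fin n → Prop) : Prop :=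
  (dirGraph E).IsTree ∧
  (∀ j, atMostTwo {p | E j p}) ∧
  (∀ j, atMostTwo {c | E c j}) ∧
  (∀ j p₁ p₂, E j p₁ → E j p₂ → p₁ ≠ p₂ →
    ∀ x₁ x₂, inSub E j p₁ x₁ → inSub E j p₂ x₂ →
      (x₁ < j ∧ j < x₂) ∨ (x₂ < j ∧ j < x₁)) ∧
  (∀ j c₁ c₂, E c₁ j → E c₂ j → c₁ ≠ c₂ →
    ∀ x₁ x₂, inSub E j c₁ x₁ → inSub E j c₂ x₂ →
      (x₁ < j ∧ j < x₂) ∨ (x₂ < j ∧ j < x₁))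
/-- An arc `(a, b, A, B)` on `[n]`: endpoints `a < b` and a partition
`A ⊔ B` of the open interval `]a, b[`. -/
structure Arc (n : ℕ) where
  a : Fin n
  b : Fin n
  A : Finset (Fin n)
  B : Finset (Fin n)
  hab : a < b
  hdisj : Disjoint A B
  hunion : A ∪ B = Finset.Ioo a b

/-- `Subarc α β` : `α` is a subarc of `β`. -/
def Subarc {n : ℕ} (α β : Arc n) : Prop :=
  β.a ≤ α.a ∧ α.b ≤ β.b ∧ α.A ⊆ β.A ∧ α.B ⊆ β.B

/-- An arc ideal: a lower set for the subarc order. -/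
def IsArcIdeal {n : ℕ} (I : Set (Arc n)) : Prop :=
  ∀ α β : Arc n, Subarc α β → β ∈ I → α ∈ I

/-- An ideal is essential when it contains all basic arcs `(i, i+1, ∅, ∅)`. -/
def EssentialIdeal {n : ℕ} (I : Set (Arc n)) : Prop :=
  ∀ α : Arc n, (α.b : ℕ) = (α.a : ℕ) + 1 → α ∈ I

/-- `α` is a subarc-minimal arc of the complement of `I`. -/
def MinNonArc {n : ℕ} (I : Set (Arc n)) (α : Arc n) : Prop :=
  α ∉ I ∧ ∀ β : Arc n, Subarc β α → β ∉ I → β = α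

/-- An ideal is simple when all subarc-minimal arcs of its complement are
up arcs (`B = ∅`) or down arcs (`A = ∅`). -/
def SimpleIdeal {n : ℕ} (I : Set (Arc n)) : Prop :=
  ∀ α : Arc n, MinNonArc I α → α.B = ∅ ∨ α.A = ∅
/-- A mandatory arc of a separating tree `E`: one arc per edge of the tree between
`α.a < α.b`, where `A` (resp. `B`) records the intermediate values admitting a
directed path to the edge (resp. from the edge). -/
def MandatoryArc {n : ℕ} (E : Fin n → Fin n → Prop) (α : Arc n) : Prop :=
  (E α.a α.b ∨ E α.b α.a) ∧
  ∀ j : Fin n, α.a < j → j < α.b →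
    ((j ∈ α.A ↔ (Relation.ReflTransGen E j α.a ∨ Relation.ReflTransGen E j α.b)) ∧
     (j ∈ α.B ↔ (Relation.ReflTransGen E α.a j ∨ Relation.ReflTransGen E α.b j)))

/-- A forbidden up arc of a separating tree `E`: the up arc `u(M, m)` where
`M = max L`, `m = min R` for two ancestor subtrees `L < R` of a node `j`. -/
def ForbiddenUpArc {n : ℕ} (E : Fin n → Fin n → Prop) (α : Arc n) : Prop :=
  α.B = ∅ ∧ ∃ j p₁ p₂ : Fin n, E j p₁ ∧ E j p₂ ∧ p₁ ≠ p₂ ∧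
    inSub E j p₁ α.a ∧ (∀ x, inSub E j p₁ x → x ≤ α.a) ∧
    inSub E j p₂ α.b ∧ (∀ x, inSub E j p₂ x → α.b ≤ x)

/-- A forbidden down arc of a separating tree `E`: the down arc `d(M, m)` where
`M = max L`, `m = min R` for two descendant subtrees `L < R` of a node `j`. -/
def ForbiddenDownArc {n : ℕ} (E : Fin n → Fin n → Prop) (α : Arc n) : Prop :=
  α.A = ∅ ∧ ∃ j c₁ c₂ : Fin n, E c₁ j ∧ E c₂ j ∧ c₁ ≠ c₂ ∧
    inSub E j c₁ α.a ∧ (∀ x, inSub E j c₁ x → x ≤ α.a) ∧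
    inSub E j c₂ α.b ∧ (∀ x, inSub E j c₂ x → α.b ≤ x)

/-- A separating tree is `I`-admissible when the arc ideal `I` contains all its
mandatory arcs and none of its forbidden arcs. -/
def AdmissibleTree {n : ℕ} (I : Set (Arc n)) (E : Fin n → Fin n → Prop) : Prop :=
  IsSepTree E ∧
  (∀ α : Arc n, MandatoryArc E α → α ∈ I) ∧
  (∀ α : Arc n, ForbiddenUpArc E α ∨ ForbiddenDownArc E α → α ∉ I)

/-- `σ` is a linear extension of the directed tree `E`: `σ p` is the value at
position `p`, and each directed edge goes from an earlier to a later value. -/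
def IsLinExt {n : ℕ} (E : Fin n → Fin n → Prop) (σ : Equiv.Perm (Fin n)) : Prop :=
  ∀ a b : Fin n, E a b → σ.symm a < σ.symm b
/-- The arc ideal of the minimal simple congruence `≡_∘` for which the separating
tree `E` is admissible: its complement is the upper ideal generated by the up and
down arcs which are not subarcs of any mandatory arc of `E`. -/
def treeMinIdeal {n : ℕ} (E : Fin n → Fin n → Prop) : Set (Arc n) :=
  {α | ¬ ∃ γ : Arc n, Subarc γ α ∧ (γ.B = ∅ ∨ γ.A = ∅) ∧
        ¬ ∃ β : Arc n, MandatoryArc E β ∧ Subarc γ β}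

/-- The arc ideal of the maximal simple congruence `≡_•` for which the separating
tree `E` is admissible: its complement is the upper ideal generated by the
forbidden arcs of `E`. -/
def treeMaxIdeal {n : ℕ} (E : Fin n → Fin n → Prop) : Set (Arc n) :=
  {α | ¬ ∃ γ : Arc n, Subarc γ α ∧ (ForbiddenUpArc E γ ∨ ForbiddenDownArc E γ)}

/-!
Both endpoints have the form "no subarc lies in `G`" for a set `G` of generating arcs, so they
are arc ideals, simple as soon as the generators are up or down arcs. For a simple ideal `I`,
containing every mandatory arc is equivalent to containing `≡_∘` (a subarc-minimal arc outside
`I` is an up or down arc, and it cannot lie below a mandatory arc), and avoiding every forbidden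
arc is equivalent to being contained in `≡_•`. Admissibility of both endpoints then amounts to
`≡_∘ ⊆ ≡_•`.

The inclusion holds because no forbidden arc is a subarc of a mandatory arc: for a forbidden up
arc `u(M, m)` at a node `j`, the value `j` lies above it, hence reaches an endpoint of the
mandatory edge by a directed path; so that edge lies in one of the two parent subtrees of `j`,
contradicting the choice of `M` as a maximum or of `m` as a minimum. Down arcs follow by
reversing all edges.

`≡_∘` is essential because every basic arc lies below the mandatory arc of a tree edge `u — v`
crossing it. That this arc exists means that every `u < j < v` either reaches the edge or is
reached from it, and not both, which holds because the tree path from `j` to the edge never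
turns around at a node: at a turn, the separating condition would put `j` on the other side of
that node from both `u` and `v`.
-/

open SimpleGraph

variable {n : ℕ}

section Ideals

lemma subarc_refl (α : Arc n) : Subarc α α :=
  ⟨le_rfl, le_rfl, Subset.rfl, Subset.rfl⟩

lemma Subarc.trans {α β γ : Arc n} (h₁ : Subarc α β) (h₂ : Subarc β γ) : Subarc α γ :=
  ⟨h₂.1.trans h₁.1, h₁.2.1.trans h₂.2.1, h₁.2.2.1.trans h₂.2.2.1, h₁.2.2.2.trans h₂.2.2.2⟩

lemma Subarc.eq_of_endpoints {α β : Arc n} (h : Subarc α β) (ha : α.a = β.a) (hb : α.b = β.b) :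
    α = β := by
  have key : ∀ {S T S' T' : Finset (Fin n)}, S ⊆ S' → T ⊆ T' → Disjoint S' T' →
      S ∪ T = S' ∪ T' → S = S' := fun hS hT hd hST =>
    hS.antisymm fun x hx => (mem_union.1 (hST ▸ mem_union_left _ hx)).resolve_right
      fun hxT => disjoint_left.1 hd hx (hT hxT)
  have hAB : α.A ∪ α.B = β.A ∪ β.B := by rw [α.hunion, β.hunion, ha, hb]
  have hA := key h.2.2.1 h.2.2.2 β.hdisj hAB
  have hB := key h.2.2.2 h.2.2.1 β.hdisj.symm (by rwa [union_comm, union_comm β.B])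
  cases α; cases β
  simp_all

lemma exists_subarc_minNonArc {I : Set (Arc n)} {α : Arc n} (hα : α ∉ I) :
    ∃ γ, Subarc γ α ∧ MinNonArc I γ := by
  obtain ⟨γ, ⟨hγα, hγ⟩, hmin⟩ := (measure fun γ : Arc n => (γ.b : ℕ) - γ.a).wf.has_min
    {γ | Subarc γ α ∧ γ ∉ I} ⟨α, subarc_refl α, hα⟩
  refine ⟨γ, hγα, hγ, fun δ hδγ hδ => ?_⟩
  have hlen : ¬ (δ.b : ℕ) - δ.a < (γ.b : ℕ) - γ.a := hmin δ ⟨hδγ.trans hγα, hδ⟩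
  have := hδγ.1; have := hδγ.2.1; have := δ.hab
  simp only [Fin.le_def, Fin.lt_def] at *
  exact hδγ.eq_of_endpoints (by ext; omega) (by ext; omega)

def idealAvoiding (G : Arc n → Prop) : Set (Arc n) :=
  {α | ¬ ∃ γ, Subarc γ α ∧ G γ}

variable {G : Arc n → Prop} {I : Set (Arc n)}

lemma notMem_idealAvoiding {γ : Arc n} (h : G γ) : γ ∉ idealAvoiding G :=
  fun h' => h' ⟨γ, subarc_refl γ, h⟩

lemma isArcIdeal_idealAvoiding (G : Arc n → Prop) : IsArcIdeal (idealAvoiding G) :=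
  fun _ _ hαβ hβ ⟨γ, hγα, hγ⟩ => hβ ⟨γ, hγα.trans hαβ, hγ⟩

lemma simpleIdeal_idealAvoiding (hG : ∀ γ, G γ → γ.B = ∅ ∨ γ.A = ∅) :
    SimpleIdeal (idealAvoiding G) := by
  rintro α ⟨hα, hmin⟩
  obtain ⟨γ, hγα, hγ⟩ := not_not.mp hα
  obtain rfl := hmin γ hγα (notMem_idealAvoiding hγ)
  exact hG γ hγ

lemma essentialIdeal_idealAvoiding (hG : ∀ γ, G γ → ∃ j, γ.a < j ∧ j < γ.b) :
    EssentialIdeal (idealAvoiding G) := by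
  rintro α hα ⟨γ, hγα, hγ⟩
  obtain ⟨j, hj₁, hj₂⟩ := hG γ hγ
  have := hγα.1; have := hγα.2.1
  simp only [Fin.le_def, Fin.lt_def] at *
  omega

lemma subset_idealAvoiding_iff (hI : IsArcIdeal I) :
    I ⊆ idealAvoiding G ↔ ∀ γ, G γ → γ ∉ I :=
  ⟨fun h _ hγ hγI => notMem_idealAvoiding hγ (h hγI),
    fun h α hα ⟨γ, hγα, hγ⟩ => h γ hγ (hI γ α hγα hα)⟩

lemma idealAvoiding_subset_iff_of_simpleIdeal (M : Arc n → Prop) (hI : IsArcIdeal I)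
    (hs : SimpleIdeal I) :
    idealAvoiding (fun γ => (γ.B = ∅ ∨ γ.A = ∅) ∧ ¬ ∃ β, M β ∧ Subarc γ β) ⊆ I ↔
      ∀ β, M β → β ∈ I := by
  refine ⟨fun h β hβ => h fun ⟨γ, hγβ, _, hγ⟩ => hγ ⟨β, hβ, hγβ⟩, fun h α hα => ?_⟩
  by_contra hαI
  obtain ⟨γ, hγα, hγ⟩ := exists_subarc_minNonArc hαI
  exact hα ⟨γ, hγα, hs γ hγ, fun ⟨β, hβ, hγβ⟩ => hγ.1 (hI γ β hγβ (h β hβ))⟩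

end Ideals

section Graph

variable {V : Type*}

lemma dirGraph_swap (E : V → V → Prop) : dirGraph (Function.swap E) = dirGraph E := by
  ext a b
  exact and_congr_right' or_comm

lemma inSub_swap {E : V → V → Prop} {j p x : V} :
    inSub (Function.swap E) j p x ↔ inSub E j p x := by
  rw [inSub, inSub, dirGraph_swap]

lemma SimpleGraph.IsAcyclic.walk_eq {G : SimpleGraph V} (hG : G.IsAcyclic) {x y : V}
    {p q : G.Walk x y} (hp : p.IsPath) (hq : q.IsPath) : p = q :=
  congrArg Subtype.val ((hG.subsingleton_path x y).elim ⟨p, hp⟩ ⟨q, hq⟩)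

lemma SimpleGraph.IsAcyclic.exists_mem_darts [DecidableEq V] {G : SimpleGraph V}
    (hG : G.IsAcyclic) {x y z : V} {Q : G.Walk x z} (hQ : Q.IsPath) (hy : y ∈ Q.support)
    (hxy : x ≠ y) {S : G.Walk x y} (hS : S.IsPath) : ∃ d ∈ S.darts, d ∈ Q.darts := by
  obtain rfl := hG.walk_eq hS (hQ.takeUntil hy)
  obtain ⟨d, hd⟩ := List.exists_mem_of_ne_nil _ fun h => hxy (Walk.darts_eq_nil.mp h).eq
  exact ⟨d, hd, Q.darts_takeUntil_subset_darts hy hd⟩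

lemma SimpleGraph.Walk.IsPath.fst_ne_snd {G : SimpleGraph V} {x y : V} {Q : G.Walk x y}
    (hQ : Q.IsPath) {d d' : G.Dart} (hd : d ∈ Q.darts) (hd' : d' ∈ Q.darts)
    (hdd' : d.snd = d'.fst) : d.fst ≠ d'.snd := by
  intro h
  have hsymm : d = d'.symm := (Dart.ext_iff _ _).2 (Prod.ext h hdd')
  have : d = d' := List.inj_on_of_nodup_map hQ.isTrail.edges_nodup hd hd'
    (by rw [hsymm, Dart.edge_symm])
  obtain rfl := this
  exact d.adj.ne h

lemma reflTransGen_of_forall_mem_darts {G : SimpleGraph V} {r : V → V → Prop} {x y : V}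
    (Q : G.Walk x y) (h : ∀ d ∈ Q.darts, r d.fst d.snd) : ReflTransGen r x y := by
  induction Q with
  | nil => exact .refl
  | cons _ Q ih =>
    simp only [Walk.darts_cons, List.forall_mem_cons] at h
    exact .head h.1 (ih h.2)

lemma exists_isPath_of_reflTransGen [DecidableEq V] {E : V → V → Prop} {x y : V}
    (h : ReflTransGen E x y) :
    ∃ S : (dirGraph E).Walk x y, S.IsPath ∧ ∀ d ∈ S.darts, E d.fst d.snd := by
  induction h with
  | refl => exact ⟨.nil, .nil, by simp⟩
  | @tail b c _ hbc ih =>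
    obtain ⟨S, hS, hSE⟩ := ih
    by_cases hc : c ∈ S.support
    · exact ⟨S.takeUntil c hc, hS.takeUntil hc,
        fun d hd => hSE d (S.darts_takeUntil_subset_darts hc hd)⟩
    · have hbc' : (dirGraph E).Adj b c := ⟨fun h => hc (h ▸ S.end_mem_support), .inl hbc⟩
      refine ⟨S.concat hbc', hS.concat hc hbc', fun d hd => ?_⟩
      rw [Walk.darts_concat, List.concat_eq_append, List.mem_append, List.mem_singleton] at hd
      rcases hd with hd | rfl
      exacts [hSE d hd, hbc]

lemma exists_isPath_mem_support_of_adj [DecidableEq V] {G : SimpleGraph V} (hG : G.Connected)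
    (j : V) {u v : V} (huv : G.Adj u v) :
    ∃ w, (w = u ∨ w = v) ∧ ∃ Q : G.Walk j w, Q.IsPath ∧ u ∈ Q.support ∧ v ∈ Q.support := by
  obtain ⟨W⟩ := hG.preconnected j u
  by_cases hv : v ∈ W.bypass.support
  · exact ⟨u, .inl rfl, W.bypass, W.bypass_isPath, W.bypass.end_mem_support, hv⟩
  · refine ⟨v, .inr rfl, W.bypass.concat huv, W.bypass_isPath.concat hv huv, ?_, ?_⟩ <;>
      simp [Walk.support_concat]

lemma exists_adj_le_lt_of_walk [LinearOrder V] {G : SimpleGraph V} {a x y : V} (W : G.Walk x y)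
    (hx : x ≤ a) (hy : a < y) : ∃ u v, G.Adj u v ∧ u ≤ a ∧ a < v := by
  induction W with
  | nil => exact absurd hy (not_lt.2 hx)
  | @cons x z y h W ih =>
    by_cases hz : z ≤ a
    · exact ih hz hy
    · exact ⟨x, z, h, hx, not_le.1 hz⟩

variable [DecidableEq V] {E : V → V → Prop}

lemma inSub_of_adj (hac : (dirGraph E).IsAcyclic) {j p y x : V} (hpj : (dirGraph E).Adj p j)
    (hy : inSub E j p y) (hyx : (dirGraph E).Adj y x) (hxj : x ≠ j) : inSub E j p x := by
  intro W
  rcases List.mem_cons.mp (Walk.support_cons hyx W ▸ hy (.cons hyx W)) with rfl | h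
  · -- `y = p`, and the path from `x` to `j` is `x — p — j`
    have hxpj : (Walk.cons hyx.symm (.cons hpj .nil)).IsPath := by
      simp [hyx.ne.symm, hpj.ne, hxj]
    exact W.support_bypass_subset_support (hac.walk_eq W.bypass_isPath hxpj ▸ by simp)
  · exact h

lemma inSub_of_mem_darts (hac : (dirGraph E).IsAcyclic) {x y : V} {Q : (dirGraph E).Walk x y}
    (hQ : Q.IsPath) {d : (dirGraph E).Dart} (hd : d ∈ Q.darts) : inSub E d.snd d.fst x := by
  induction Q with
  | nil => simp at hd
  | cons h Q ih =>
    rw [Walk.cons_isPath_iff] at hQ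
    rcases List.mem_cons.mp hd with rfl | hd
    · exact fun W => W.start_mem_support
    · exact inSub_of_adj hac d.adj (ih hQ.1 hd) h.symm
        fun h' => hQ.2 (h' ▸ Q.dart_snd_mem_support_of_mem_darts hd)

lemma inSub_of_reflTransGen (hac : (dirGraph E).IsAcyclic) {j p₁ p₂ z : V} (h₁ : E j p₁)
    (h₂ : E j p₂) (hne : p₁ ≠ p₂) (hj₁ : j ≠ p₁) (hj₂ : j ≠ p₂)
    (htwo : atMostTwo {p | E j p}) (hz : ReflTransGen E j z) :
    z = j ∨ inSub E j p₁ z ∨ inSub E j p₂ z := by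
  induction hz with
  | refl => exact .inl rfl
  | @tail y z _ hyz ih =>
    rcases ih with rfl | ih
    · rcases htwo p₁ h₁ p₂ h₂ z hyz with h | rfl | rfl
      · exact absurd h hne
      all_goals exact .inr (by simp [inSub, Walk.start_mem_support])
    by_cases hzj : z = j
    · exact .inl hzj
    by_cases hzy : z = y
    · exact .inr (hzy ▸ ih)
    have hyz' : (dirGraph E).Adj y z := ⟨Ne.symm hzy, .inl hyz⟩
    exact .inr (ih.imp (inSub_of_adj hac ⟨hj₁.symm, .inr h₁⟩ · hyz' hzj)
      (inSub_of_adj hac ⟨hj₂.symm, .inr h₂⟩ · hyz' hzj))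

end Graph

lemma List.forall_or_forall_of_isChain {β : Type*} {F B : β → Prop} :
    ∀ {a b : β} {L : List β}, IsChain (fun c d => ¬(F c ∧ B d) ∧ ¬(B c ∧ F d)) (a :: b :: L) →
      (∀ c ∈ a :: b :: L, F c ∨ B c) →
      (∀ c ∈ a :: b :: L, F c ∧ ¬B c) ∨ (∀ c ∈ a :: b :: L, B c ∧ ¬F c)
  | a, b, [], hc, h => by
    simp only [isChain_pair, forall_mem_cons, not_mem_nil, IsEmpty.forall_iff, implies_true,
      and_true] at hc h ⊢
    tauto
  | a, b, c :: L, hc, h => by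
    rw [isChain_cons_cons] at hc
    have ih := forall_or_forall_of_isChain hc.2 fun x hx => h x (mem_cons_of_mem a hx)
    have ha := h a mem_cons_self
    simp only [forall_mem_cons] at ih ⊢
    tauto

lemma not_separates_of_lt_of_lt {α : Type*} [LinearOrder α] {S₁ S₂ : α → Prop} {t j u v : α}
    (hsep : ∀ x₁ x₂, S₁ x₁ → S₂ x₂ → (x₁ < t ∧ t < x₂) ∨ (x₂ < t ∧ t < x₁))
    (hj : S₁ j) (hu : u = t ∨ S₂ u) (hv : v = t ∨ S₂ v) (hju : u < j) (hjv : j < v) : False := by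
  rcases hu with rfl | hu <;> rcases hv with rfl | hv
  · exact lt_asymm hju hjv
  · rcases hsep j v hj hv with h | h <;> order
  · rcases hsep j u hj hu with h | h <;> order
  · rcases hsep j u hj hu with h | h <;> rcases hsep j v hj hv with h' | h' <;> order

section SepTree

variable {E : Fin n → Fin n → Prop}

def Arc.swap (α : Arc n) : Arc n where
  a := α.a
  b := α.b
  A := α.B
  B := α.A
  hab := α.hab
  hdisj := α.hdisj.symm
  hunion := by rw [Finset.union_comm]; exact α.hunion

lemma Subarc.swap {α β : Arc n} (h : Subarc α β) : Subarc α.swap β.swap :=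
  ⟨h.1, h.2.1, h.2.2.2, h.2.2.1⟩

lemma MandatoryArc.swap {β : Arc n} (h : MandatoryArc E β) :
    MandatoryArc (Function.swap E) β.swap := by
  refine ⟨h.1.symm, fun j h₁ h₂ => ?_⟩
  simp only [Arc.swap, reflTransGen_swap]
  exact (h.2 j h₁ h₂).symm

lemma ForbiddenDownArc.swap {α : Arc n} (h : ForbiddenDownArc E α) :
    ForbiddenUpArc (Function.swap E) α.swap := by
  simp only [ForbiddenUpArc, inSub_swap]
  exact h

lemma IsSepTree.swap (hE : IsSepTree E) : IsSepTree (Function.swap E) := by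
  obtain ⟨htree, hpar, hch, hsepP, hsepC⟩ := hE
  refine ⟨dirGraph_swap E ▸ htree, hch, hpar, ?_, ?_⟩ <;> simp only [inSub_swap]
  exacts [hsepC, hsepP]

lemma IsSepTree.lt_and_lt_of_inSub (hE : IsSepTree E) {j p₁ p₂ x y : Fin n} (h₁ : E j p₁)
    (h₂ : E j p₂) (hne : p₁ ≠ p₂) (hx : inSub E j p₁ x) (hy : inSub E j p₂ y) (hxy : x < y) :
    x < j ∧ j < y :=
  (hE.2.2.2.1 j p₁ p₂ h₁ h₂ hne x y hx hy).resolve_right fun h => lt_asymm hxy (h.1.trans h.2)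

lemma IsSepTree.exists_between_of_forbiddenUpArc (hE : IsSepTree E) {α : Arc n}
    (hf : ForbiddenUpArc E α) : ∃ j, α.a < j ∧ j < α.b := by
  obtain ⟨-, j, p₁, p₂, h₁, h₂, hne, ha, -, hb, -⟩ := hf
  exact ⟨j, hE.lt_and_lt_of_inSub h₁ h₂ hne ha hb α.hab⟩

lemma IsSepTree.exists_between_of_forbidden (hE : IsSepTree E) {α : Arc n}
    (hf : ForbiddenUpArc E α ∨ ForbiddenDownArc E α) : ∃ j, α.a < j ∧ j < α.b :=
  hf.elim hE.exists_between_of_forbiddenUpArc fun h =>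
    hE.swap.exists_between_of_forbiddenUpArc (α := α.swap) h.swap

lemma IsSepTree.forbiddenUpArc_not_subarc (hE : IsSepTree E) {α β : Arc n}
    (hf : ForbiddenUpArc E α) (hm : MandatoryArc E β) : ¬ Subarc α β := by
  rintro ⟨hβa, hβb, hA, -⟩
  obtain ⟨hB, j, p₁, p₂, h₁, h₂, hne, ha, hmax, hb, hmin⟩ := hf
  have hac := hE.1.isAcyclic
  have hj : α.a < j ∧ j < α.b := hE.lt_and_lt_of_inSub h₁ h₂ hne ha hb α.hab
  have hj₁ : j ≠ p₁ := by rintro rfl; exact (hmax α.b fun W => W.end_mem_support).not_gt α.hab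
  have hj₂ : j ≠ p₂ := by rintro rfl; exact (hmin α.a fun W => W.end_mem_support).not_gt α.hab
  have hjA : j ∈ α.A := by
    have : j ∈ α.A ∪ α.B := α.hunion ▸ mem_Ioo.2 hj
    simpa [hB] using this
  have hβj : β.a < j := hβa.trans_lt hj.1
  have hjβ : j < β.b := hj.2.trans_le hβb
  obtain ⟨x, hx, hjx⟩ : ∃ x, (x = β.a ∨ x = β.b) ∧ ReflTransGen E j x := by
    rcases (hm.2 j hβj hjβ).1.1 (hA hjA) with h | h
    exacts [⟨_, .inl rfl, h⟩, ⟨_, .inr rfl, h⟩]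
  have hxj : x ≠ j := by rcases hx with rfl | rfl; exacts [hβj.ne, hjβ.ne']
  have hedge : ∀ p, (dirGraph E).Adj p j → inSub E j p x →
      inSub E j p β.a ∧ inSub E j p β.b := by
    intro p hp hpx
    have hadj : (dirGraph E).Adj β.a β.b := ⟨β.hab.ne, hm.1⟩
    rcases hx with rfl | rfl
    · exact ⟨hpx, inSub_of_adj hac hp hpx hadj hjβ.ne'⟩
    · exact ⟨inSub_of_adj hac hp hpx hadj.symm hβj.ne, hpx⟩
  rcases (inSub_of_reflTransGen hac h₁ h₂ hne hj₁ hj₂ (hE.2.1 j) hjx).resolve_left hxj with h | h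
  · exact (hmax _ (hedge p₁ ⟨hj₁.symm, .inr h₁⟩ h).2).not_gt (hj.1.trans hjβ)
  · exact (hmin _ (hedge p₂ ⟨hj₂.symm, .inr h₂⟩ h).1).not_gt (hβj.trans hj.2)

lemma IsSepTree.forbidden_not_subarc (hE : IsSepTree E) {α β : Arc n}
    (hf : ForbiddenUpArc E α ∨ ForbiddenDownArc E α) (hm : MandatoryArc E β) : ¬ Subarc α β := by
  rcases hf with hf | hf
  · exact hE.forbiddenUpArc_not_subarc hf hm
  · exact fun h => hE.swap.forbiddenUpArc_not_subarc hf.swap hm.swap h.swap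

end SepTree

section Edge

variable {E : Fin n → Fin n → Prop}

lemma IsSepTree.isChain_noTurn (hE : IsSepTree E) {j u v w : Fin n}
    (huv : (dirGraph E).Adj u v) (hju : u < j) (hjv : j < v) (hw : w = u ∨ w = v)
    {Q : (dirGraph E).Walk j w} (hQ : Q.IsPath) :
    List.IsChain (fun d d' : (dirGraph E).Dart =>
      ¬(E d.fst d.snd ∧ E d'.snd d'.fst) ∧ ¬(E d.snd d.fst ∧ E d'.fst d'.snd)) Q.darts := by
  have hac := hE.1.isAcyclic
  refine Q.isChain_dartAdj_darts.imp_of_mem_imp fun d d' hd hd' (hdd' : d.snd = d'.fst) => ?_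
  have hjt : inSub E d.snd d.fst j := inSub_of_mem_darts hac hQ hd
  have hwt : inSub E d.snd d'.snd w := hdd' ▸
    inSub_of_mem_darts hac hQ.reverse (d := d'.symm) (Walk.mem_darts_reverse.2 (by simpa using hd'))
  have hct : (dirGraph E).Adj d'.snd d.snd := hdd' ▸ d'.adj.symm
  have hend : ∀ x, (x = u ∨ x = v) → x = d.snd ∨ inSub E d.snd d'.snd x := by
    intro x hx
    by_cases hxw : x = w
    · exact .inr (hxw ▸ hwt)
    by_cases hxt : x = d.snd
    · exact .inl hxt
    have hwx : (dirGraph E).Adj w x := by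
      rcases hx with rfl | rfl <;> rcases hw with rfl | rfl
      exacts [absurd rfl hxw, huv.symm, huv, absurd rfl hxw]
    exact .inr (inSub_of_adj hac hct hwt hwx hxt)
  have hturn := fun hsep => not_separates_of_lt_of_lt hsep hjt (hend u (.inl rfl))
    (hend v (.inr rfl)) hju hjv
  have hne := hQ.fst_ne_snd hd hd' hdd'
  exact ⟨fun ⟨hF, hB⟩ => hturn (hE.2.2.2.2 _ _ _ hF (hdd' ▸ hB) hne),
    fun ⟨hB, hF⟩ => hturn (hE.2.2.2.1 _ _ _ hB (hdd' ▸ hF) hne)⟩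

lemma IsSepTree.exists_monotone_path (hE : IsSepTree E) {j u v : Fin n}
    (huv : (dirGraph E).Adj u v) (hju : u < j) (hjv : j < v) :
    ∃ w, (w = u ∨ w = v) ∧ ∃ Q : (dirGraph E).Walk j w, Q.IsPath ∧ u ∈ Q.support ∧
      v ∈ Q.support ∧ ((∀ d ∈ Q.darts, E d.fst d.snd ∧ ¬E d.snd d.fst) ∨
        (∀ d ∈ Q.darts, E d.snd d.fst ∧ ¬E d.fst d.snd)) := by
  obtain ⟨w, hw, Q, hQ, hu, hv⟩ := exists_isPath_mem_support_of_adj hE.1.connected j huv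
  refine ⟨w, hw, Q, hQ, hu, hv, ?_⟩
  have hlen : 2 ≤ Q.darts.length := by
    have h3 : ({j, u, v} : Finset (Fin n)) ⊆ Q.support.toFinset := by
      simp [insert_subset_iff, hu, hv]
    replace h3 := (card_le_card h3).trans (List.toFinset_card_le _)
    rw [card_eq_three.2 ⟨j, u, v, hju.ne', hjv.ne, huv.ne, rfl⟩, Walk.length_support,
      ← Walk.length_darts] at h3
    omega
  obtain ⟨d₁, d₂, L, hL⟩ : ∃ d₁ d₂ L, Q.darts = d₁ :: d₂ :: L := by
    match h : Q.darts, hlen with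
    | d₁ :: d₂ :: L, _ => exact ⟨d₁, d₂, L, rfl⟩
  have hchain := hE.isChain_noTurn huv hju hjv hw hQ
  rw [hL] at hchain ⊢
  exact List.forall_or_forall_of_isChain hchain fun d _ => d.adj.2

lemma IsSepTree.reflTransGen_or_reflTransGen (hE : IsSepTree E) {j u v : Fin n}
    (huv : (dirGraph E).Adj u v) (hju : u < j) (hjv : j < v) :
    (ReflTransGen E j u ∨ ReflTransGen E j v) ∨ (ReflTransGen E u j ∨ ReflTransGen E v j) := by
  obtain ⟨w, hw, Q, -, -, -, hQ | hQ⟩ := hE.exists_monotone_path huv hju hjv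
  · have := reflTransGen_of_forall_mem_darts (r := E) Q fun d hd => (hQ d hd).1
    rcases hw with rfl | rfl <;> tauto
  · have := reflTransGen_of_forall_mem_darts (r := Function.swap E) Q fun d hd => (hQ d hd).1
    rw [reflTransGen_swap] at this
    rcases hw with rfl | rfl <;> tauto

lemma IsSepTree.not_reflTransGen_and_reflTransGen (hE : IsSepTree E) {j u v : Fin n}
    (huv : (dirGraph E).Adj u v) (hju : u < j) (hjv : j < v) :
    ¬((ReflTransGen E j u ∨ ReflTransGen E j v) ∧ (ReflTransGen E u j ∨ ReflTransGen E v j)) := by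
  rintro ⟨hbelow, habove⟩
  have hac := hE.1.isAcyclic
  obtain ⟨w, -, Q, hQ, hu, hv, hQE | hQE⟩ := hE.exists_monotone_path huv hju hjv
  · obtain ⟨x, hx, hxj, hjx⟩ : ∃ x ∈ Q.support, j ≠ x ∧ ReflTransGen E x j := by
      rcases habove with h | h
      exacts [⟨u, hu, hju.ne', h⟩, ⟨v, hv, hjv.ne, h⟩]
    obtain ⟨S, hS, hSE⟩ := exists_isPath_of_reflTransGen hjx
    obtain ⟨d, hd, hdQ⟩ := hac.exists_mem_darts hQ hx hxj hS.reverse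
    exact (hQE d hdQ).2 (hSE d.symm (Walk.mem_darts_reverse.1 hd))
  · obtain ⟨x, hx, hxj, hjx⟩ : ∃ x ∈ Q.support, j ≠ x ∧ ReflTransGen E j x := by
      rcases hbelow with h | h
      exacts [⟨u, hu, hju.ne', h⟩, ⟨v, hv, hjv.ne, h⟩]
    obtain ⟨S, hS, hSE⟩ := exists_isPath_of_reflTransGen hjx
    obtain ⟨d, hd, hdQ⟩ := hac.exists_mem_darts hQ hx hxj hS
    exact (hQE d hdQ).2 (hSE d hd)

lemma IsSepTree.exists_mandatoryArc (hE : IsSepTree E) {u v : Fin n} (hadj : E u v ∨ E v u)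
    (huv : u < v) : ∃ β : Arc n, MandatoryArc E β ∧ β.a = u ∧ β.b = v := by
  classical
  have huv' : (dirGraph E).Adj u v := ⟨huv.ne, hadj⟩
  refine ⟨⟨u, v, {j ∈ Ioo u v | ReflTransGen E j u ∨ ReflTransGen E j v},
    {j ∈ Ioo u v | ReflTransGen E u j ∨ ReflTransGen E v j}, huv, ?_, ?_⟩,
    ⟨hadj, fun j hj₁ hj₂ => by simp [hj₁, hj₂]⟩, rfl, rfl⟩
  · refine disjoint_filter.2 fun j hj h₁ h₂ => ?_
    rw [mem_Ioo] at hj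
    exact hE.not_reflTransGen_and_reflTransGen huv' hj.1 hj.2 ⟨h₁, h₂⟩
  · rw [← filter_or]
    exact filter_true_of_mem fun j hj =>
      hE.reflTransGen_or_reflTransGen huv' (mem_Ioo.1 hj).1 (mem_Ioo.1 hj).2

lemma IsSepTree.exists_mandatoryArc_subarc (hE : IsSepTree E) {α : Arc n}
    (hα : (α.b : ℕ) = α.a + 1) : ∃ β, MandatoryArc E β ∧ Subarc α β := by
  obtain ⟨W⟩ := hE.1.connected.preconnected α.a α.b
  obtain ⟨u, v, ⟨-, hadj⟩, hu, hv⟩ := exists_adj_le_lt_of_walk W le_rfl α.hab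
  obtain ⟨β, hβ, rfl, rfl⟩ := hE.exists_mandatoryArc hadj (hu.trans_lt hv)
  have hAB : α.A ∪ α.B = ∅ := by
    rw [α.hunion]
    ext x
    simp only [mem_Ioo, Fin.lt_def, notMem_empty, iff_false]
    omega
  obtain ⟨hA, hB⟩ := union_eq_empty.1 hAB
  refine ⟨β, hβ, hu, ?_, hA ▸ empty_subset _, hB ▸ empty_subset _⟩
  simp only [Fin.le_def, Fin.lt_def] at hv ⊢
  omega

lemma IsSepTree.essentialIdeal_of_mandatoryArc_mem (hE : IsSepTree E) {I : Set (Arc n)}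
    (hI : IsArcIdeal I) (hM : ∀ β, MandatoryArc E β → β ∈ I) : EssentialIdeal I := fun α hα =>
  let ⟨β, hβ, hαβ⟩ := hE.exists_mandatoryArc_subarc hα
  hI α β hαβ (hM β hβ)

end Edge

/-- for a separating tree `E`, the simple essential congruences for
which `E` is admissible form the interval `[≡_∘, ≡_•]` in the lattice of simple
congruences (ordered by inclusion of arc ideals), with the endpoints as described. -/
theorem stmt11 {n : ℕ} (E : Fin n → Fin n → Prop) (hE : IsSepTree E) :
    (IsArcIdeal (treeMinIdeal E) ∧ EssentialIdeal (treeMinIdeal E) ∧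
      SimpleIdeal (treeMinIdeal E) ∧ AdmissibleTree (treeMinIdeal E) E) ∧
    (IsArcIdeal (treeMaxIdeal E) ∧ EssentialIdeal (treeMaxIdeal E) ∧
      SimpleIdeal (treeMaxIdeal E) ∧ AdmissibleTree (treeMaxIdeal E) E) ∧
    (∀ I : Set (Arc n), IsArcIdeal I → EssentialIdeal I → SimpleIdeal I →
      (AdmissibleTree I E ↔ treeMinIdeal E ⊆ I ∧ I ⊆ treeMaxIdeal E)) := by
  have hMinIdeal : IsArcIdeal (treeMinIdeal E) := isArcIdeal_idealAvoiding _
  have hMaxIdeal : IsArcIdeal (treeMaxIdeal E) := isArcIdeal_idealAvoiding _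
  have hMinSimple : SimpleIdeal (treeMinIdeal E) := simpleIdeal_idealAvoiding fun _ h => h.1
  have hMaxSimple : SimpleIdeal (treeMaxIdeal E) :=
    simpleIdeal_idealAvoiding fun _ h => h.imp (·.1) (·.1)
  have hMinIff : ∀ I, IsArcIdeal I → SimpleIdeal I →
      (treeMinIdeal E ⊆ I ↔ ∀ β, MandatoryArc E β → β ∈ I) := fun I hI hs =>
    idealAvoiding_subset_iff_of_simpleIdeal _ hI hs
  have hInterval : ∀ I, IsArcIdeal I → SimpleIdeal I →
      (AdmissibleTree I E ↔ treeMinIdeal E ⊆ I ∧ I ⊆ treeMaxIdeal E) := fun I hI hs =>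
    ⟨fun ⟨_, hM, hF⟩ => ⟨(hMinIff I hI hs).2 hM, (subset_idealAvoiding_iff hI).2 hF⟩,
      fun ⟨hMin, hMax⟩ => ⟨hE, (hMinIff I hI hs).1 hMin, (subset_idealAvoiding_iff hI).1 hMax⟩⟩
  have hMinMax : treeMinIdeal E ⊆ treeMaxIdeal E :=
    (subset_idealAvoiding_iff hMinIdeal).2 fun γ hγ => notMem_idealAvoiding
      ⟨hγ.imp (·.1) (·.1), fun ⟨_, hβ, hγβ⟩ => hE.forbidden_not_subarc hγ hβ hγβ⟩
  refine ⟨⟨hMinIdeal, hE.essentialIdeal_of_mandatoryArc_mem hMinIdeal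
      ((hMinIff _ hMinIdeal hMinSimple).1 subset_rfl), hMinSimple,
      (hInterval _ hMinIdeal hMinSimple).2 ⟨subset_rfl, hMinMax⟩⟩,
    ⟨hMaxIdeal, essentialIdeal_idealAvoiding fun _ => hE.exists_between_of_forbidden, hMaxSimple,
      (hInterval _ hMaxIdeal hMaxSimple).2 ⟨hMinMax, subset_rfl⟩⟩,
    fun I hI _ hs => hInterval I hI hs⟩
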